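/- Let Ω be a compact convex subset of a Banach space. For any Lipschitz curve γ : [a,b] → Ω, any ε > 0, and any compact K ⊆ Ω with H¹_∞(im(γ) ∩ K) < ε, there exists a Lipschitz curve γ̃ : [a,b] → Ω such that: γ̃ has the same endpoint values as γ; μ_{γ̃}(K) < ε; and μ_{γ̃}(A) < μ_γ(A) + ε for every Borel set A ⊆ Ω. -/

import Mathlib

open Metric Set MeasureTheory
open scoped ENNReal NNReal

section CurveInfrastructure

variable {E : Type*} [PseudoMetricSpace E]

theorem evar_Icc_ne_top {K : ℝ≥0} {γ : ℝ → E} (hγ : LipschitzWith K γ) (s t : ℝ) :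
    eVariationOn γ (Set.Icc s t) ≠ ⊤ := by
  have h := (hγ.locallyBoundedVariationOn Set.univ) s t (Set.mem_univ s) (Set.mem_univ t)
  simpa [BoundedVariationOn, Set.univ_inter] using h

theorem evar_Icc_le {K : ℝ≥0} {γ : ℝ → E} (hγ : LipschitzWith K γ) {s t : ℝ} (_hst : s ≤ t) :
    eVariationOn γ (Set.Icc s t) ≤ (K : ℝ≥0∞) * ENNReal.ofReal (t - s) := by
  have h1 : eVariationOn γ (Set.Icc s t) ≤ (K : ℝ≥0∞) * eVariationOn id (Set.Icc s t) := by
    have := hγ.lipschitzOnWith.comp_eVariationOn_le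
      (Set.mapsTo_univ (id : ℝ → ℝ) (Set.Icc s t))
    simpa [Function.comp] using this
  have h2 : eVariationOn (id : ℝ → ℝ) (Set.Icc s t) ≤ ENNReal.ofReal (t - s) := by
    have := (monotoneOn_id (s := (Set.univ : Set ℝ))).eVariationOn_le
      (Set.mem_univ s) (Set.mem_univ t)
    simpa [Set.univ_inter] using this
  exact h1.trans (by gcongr)

/-- The (clamped) variation function of the curve `γ` on `[a,b]`: `t ↦` the total variation
of `γ` on `[a, max a (min t b)]`. -/
noncomputable def curveVar (γ : ℝ → E) (a b t : ℝ) : ℝ :=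
  (eVariationOn γ (Set.Icc a (max a (min t b)))).toReal

theorem curveVar_mono {K : ℝ≥0} {γ : ℝ → E} (hγ : LipschitzWith K γ) (a b : ℝ) :
    Monotone (curveVar γ a b) := by
  intro s t hst
  have hc : max a (min s b) ≤ max a (min t b) :=
    max_le_max le_rfl (min_le_min hst le_rfl)
  exact ENNReal.toReal_mono (evar_Icc_ne_top hγ a _)
    (eVariationOn.mono γ (Set.Icc_subset_Icc le_rfl hc))

theorem curveVar_lipschitzOnIci {K : ℝ≥0} {γ : ℝ → E} (hγ : LipschitzWith K γ) (a : ℝ) :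
    LipschitzOnWith K (fun u => (eVariationOn γ (Set.Icc a u)).toReal) (Set.Ici a) := by
  rw [lipschitzOnWith_iff_dist_le_mul]
  intro u hu v hv
  wlog huv : v ≤ u generalizing u v
  · rw [dist_comm, dist_comm u v]
    exact this v hv u hu (not_le.mp huv).le
  have hfin1 := evar_Icc_ne_top hγ a u
  have hfin2 := evar_Icc_ne_top hγ a v
  have hfin3 := evar_Icc_ne_top hγ v u
  have key : eVariationOn γ (Set.Icc a v) + eVariationOn γ (Set.Icc v u)
      = eVariationOn γ (Set.Icc a u) := by
    simpa [Set.univ_inter] using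
      eVariationOn.Icc_add_Icc γ (s := (Set.univ : Set ℝ)) hv huv (Set.mem_univ v)
  have hsplit : (eVariationOn γ (Set.Icc a u)).toReal
      = (eVariationOn γ (Set.Icc a v)).toReal + (eVariationOn γ (Set.Icc v u)).toReal := by
    rw [← ENNReal.toReal_add hfin2 hfin3, key]
  have hbound : (eVariationOn γ (Set.Icc v u)).toReal ≤ (K : ℝ) * (u - v) := by
    have h := evar_Icc_le hγ huv
    have := ENNReal.toReal_mono (by finiteness) h
    rwa [ENNReal.toReal_mul, ENNReal.coe_toReal, ENNReal.toReal_ofReal (by linarith)] at this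
  have hmono : (eVariationOn γ (Set.Icc a v)).toReal ≤ (eVariationOn γ (Set.Icc a u)).toReal :=
    ENNReal.toReal_mono hfin1 (eVariationOn.mono γ (Set.Icc_subset_Icc le_rfl huv))
  rw [Real.dist_eq, abs_of_nonneg (by linarith), Real.dist_eq, abs_of_nonneg (by linarith)]
  calc (eVariationOn γ (Set.Icc a u)).toReal - (eVariationOn γ (Set.Icc a v)).toReal
      = (eVariationOn γ (Set.Icc v u)).toReal := by rw [hsplit]; ring
    _ ≤ (K : ℝ) * (u - v) := hbound

theorem curveVar_lipschitz {K : ℝ≥0} {γ : ℝ → E} (hγ : LipschitzWith K γ) (a b : ℝ) :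
    LipschitzWith K (curveVar γ a b) := by
  have hclamp : LipschitzWith 1 (fun t : ℝ => max a (min t b)) :=
    (LipschitzWith.id.min_const b).const_max a
  have hmaps : Set.MapsTo (fun t : ℝ => max a (min t b)) Set.univ (Set.Ici a) :=
    fun t _ => Set.mem_Ici.mpr (le_max_left _ _)
  have hcomp := (curveVar_lipschitzOnIci hγ a).comp
    (hclamp.lipschitzOnWith (s := Set.univ)) hmaps
  rw [← lipschitzOnWith_univ]
  rw [mul_one] at hcomp
  exact hcomp

/-- The variation function of a Lipschitz curve on `[a,b]`, as a Stieltjes function. -/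
noncomputable def curveStieltjes (γ : ℝ → E) (K : ℝ≥0) (hγ : LipschitzWith K γ) (a b : ℝ) :
    StieltjesFunction ℝ where
  toFun := curveVar γ a b
  mono' := curveVar_mono hγ a b
  right_continuous' := fun _ =>
    ((curveVar_lipschitz hγ a b).continuous.continuousAt).continuousWithinAt

/-- The length measure `μ_γ` of a Lipschitz curve `γ` restricted to `[a,b]`: the pushforward
under `γ` of the Lebesgue–Stieltjes measure of the variation function of `γ` on `[a,b]`. -/
noncomputable def curveMeasure [MeasurableSpace E] (γ : ℝ → E) (K : ℝ≥0)
    (hγ : LipschitzWith K γ) (a b : ℝ) : Measure E :=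
  Measure.map γ (curveStieltjes γ K hγ a b).measure

/-- The path integral `∫_γ f ds` of a nonnegative Borel function along a Lipschitz curve. -/
noncomputable def pathLIntegral [MeasurableSpace E] (f : E → ℝ) (γ : ℝ → E) (K : ℝ≥0)
    (hγ : LipschitzWith K γ) (a b : ℝ) : ℝ≥0∞ :=
  ∫⁻ x, ENNReal.ofReal (f x) ∂(curveMeasure γ K hγ a b)

end CurveInfrastructure

/-- The Hausdorff 1-content of a set: infimum of `∑ diam (E i)` over countable covers. -/
noncomputable def hausdorffContent {Ω : Type*} [MetricSpace Ω] (S : Set Ω) : ℝ≥0∞ :=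
  ⨅ (E : ℕ → Set Ω) (_ : S ⊆ ⋃ i, E i), ∑' i, EMetric.diam (E i)


section ChordAux

open Set Filter
open scoped Topology

set_option linter.unusedSectionVars false
set_option linter.unusedVariables false

variable {X : Type*} [NormedAddCommGroup X] [NormedSpace ℝ X]

@[simp] lemma curveStieltjes_apply {L : ℝ≥0} {γ : ℝ → X} (hγ : LipschitzWith L γ) (a b u : ℝ) :
    curveStieltjes γ L hγ a b u = curveVar γ a b u := rfl

lemma curveVar_of_le {L : ℝ≥0} {γ : ℝ → X} (hγ : LipschitzWith L γ) {a b t : ℝ}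
    (hab : a ≤ b) (ht : t ≤ a) : curveVar γ a b t = 0 := by
  have h1 : max a (min t b) = a := by
    rw [min_eq_left (ht.trans hab), max_eq_left ht]
  rw [curveVar, h1]
  rw [Set.Icc_self, eVariationOn.subsingleton γ (Set.subsingleton_singleton)]
  simp

lemma curveVar_of_ge {L : ℝ≥0} {γ : ℝ → X} (hγ : LipschitzWith L γ) {a b t : ℝ}
    (hab : a ≤ b) (ht : b ≤ t) : curveVar γ a b t = curveVar γ a b b := by
  have h1 : max a (min t b) = max a b := by rw [min_eq_right ht]
  have h2 : max a (min b b) = max a b := by rw [min_self]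
  rw [curveVar, curveVar, h1, h2]

lemma tendsto_curveVar_atBot {L : ℝ≥0} {γ : ℝ → X} (hγ : LipschitzWith L γ) {a b : ℝ}
    (hab : a ≤ b) : Tendsto (curveVar γ a b) atBot (𝓝 0) := by
  apply Tendsto.congr' (f₁ := fun _ => (0:ℝ))
  · filter_upwards [eventually_le_atBot a] with t ht
    exact (curveVar_of_le hγ hab ht).symm
  · exact tendsto_const_nhds

lemma tendsto_curveVar_atTop {L : ℝ≥0} {γ : ℝ → X} (hγ : LipschitzWith L γ) {a b : ℝ}
    (hab : a ≤ b) : Tendsto (curveVar γ a b) atTop (𝓝 (curveVar γ a b b)) := by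
  apply Tendsto.congr' (f₁ := fun _ => curveVar γ a b b)
  · filter_upwards [eventually_ge_atTop b] with t ht
    exact (curveVar_of_ge hγ hab ht).symm
  · exact tendsto_const_nhds

lemma clamp_of_mem {a b t : ℝ} (h : t ∈ Set.Icc a b) : max a (min t b) = t := by
  rw [min_eq_left h.2, max_eq_right h.1]

lemma curveVar_sub {L : ℝ≥0} {γ : ℝ → X} (hγ : LipschitzWith L γ) {a b u v : ℝ}
    (huv : u ≤ v) :
    curveVar γ a b v - curveVar γ a b u
      = (eVariationOn γ (Set.Icc (max a (min u b)) (max a (min v b)))).toReal := by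
  set cu := max a (min u b) with hcu
  set cv := max a (min v b) with hcv
  have hacu : a ≤ cu := le_max_left _ _
  have hcc : cu ≤ cv := max_le_max le_rfl (min_le_min huv le_rfl)
  have key : eVariationOn γ (Set.Icc a cu) + eVariationOn γ (Set.Icc cu cv)
      = eVariationOn γ (Set.Icc a cv) := by
    simpa [Set.univ_inter] using
      eVariationOn.Icc_add_Icc γ (s := (Set.univ : Set ℝ)) hacu hcc (Set.mem_univ cu)
  have h2 : (eVariationOn γ (Set.Icc a cv)).toReal
      = (eVariationOn γ (Set.Icc a cu)).toReal + (eVariationOn γ (Set.Icc cu cv)).toReal := by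
    rw [← ENNReal.toReal_add (evar_Icc_ne_top hγ _ _) (evar_Icc_ne_top hγ _ _), key]
  show (eVariationOn γ (Set.Icc a cv)).toReal - (eVariationOn γ (Set.Icc a cu)).toReal = _
  rw [h2]; ring

lemma curveMeasure_Iic {L : ℝ≥0} {γ : ℝ → X} (hγ : LipschitzWith L γ) {a b : ℝ}
    (hab : a ≤ b) (x : ℝ) :
    (curveStieltjes γ L hγ a b).measure (Set.Iic x) = ENNReal.ofReal (curveVar γ a b x) := by
  rw [StieltjesFunction.measure_Iic _ (tendsto_curveVar_atBot hγ hab) x]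
  simp

lemma curveMeasure_univ {L : ℝ≥0} {γ : ℝ → X} (hγ : LipschitzWith L γ) {a b : ℝ}
    (hab : a ≤ b) :
    (curveStieltjes γ L hγ a b).measure Set.univ = ENNReal.ofReal (curveVar γ a b b) := by
  rw [StieltjesFunction.measure_univ _ (tendsto_curveVar_atBot hγ hab)
    (tendsto_curveVar_atTop hγ hab)]
  simp

lemma curveMeasure_finite {L : ℝ≥0} {γ : ℝ → X} (hγ : LipschitzWith L γ) {a b : ℝ}
    (hab : a ≤ b) : MeasureTheory.IsFiniteMeasure (curveStieltjes γ L hγ a b).measure :=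
  ⟨by rw [curveMeasure_univ hγ hab]; exact ENNReal.ofReal_lt_top⟩

lemma curveMeasure_Iic_zero {L : ℝ≥0} {γ : ℝ → X} (hγ : LipschitzWith L γ) {a b : ℝ}
    (hab : a ≤ b) : (curveStieltjes γ L hγ a b).measure (Set.Iic a) = 0 := by
  rw [curveMeasure_Iic hγ hab, curveVar_of_le hγ hab le_rfl]; simp

lemma curveMeasure_Ioi_zero {L : ℝ≥0} {γ : ℝ → X} (hγ : LipschitzWith L γ) {a b : ℝ}
    (hab : a ≤ b) : (curveStieltjes γ L hγ a b).measure (Set.Ioi b) = 0 := by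
  haveI := curveMeasure_finite hγ hab
  have h1 : Set.Ioi b = (Set.Iic b)ᶜ := (Set.compl_Iic).symm
  rw [h1, MeasureTheory.measure_compl measurableSet_Iic (MeasureTheory.measure_ne_top _ _),
    curveMeasure_univ hγ hab, curveMeasure_Iic hγ hab]
  simp

lemma curveMeasure_singleton {L : ℝ≥0} {γ : ℝ → X} (hγ : LipschitzWith L γ) (a b x : ℝ) :
    (curveStieltjes γ L hγ a b).measure {x} = 0 := by
  rw [StieltjesFunction.measure_singleton]
  have hcont : Continuous (curveVar γ a b) := (curveVar_lipschitz hγ a b).continuous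
  have hll : Function.leftLim (⇑(curveStieltjes γ L hγ a b)) x = curveVar γ a b x := by
    exact leftLim_eq_of_tendsto ((hcont.tendsto x).mono_left nhdsWithin_le_nhds)
  rw [hll]
  simp

lemma curveMeasure_Ioc_le {L : ℝ≥0} {γ : ℝ → X} (hγ : LipschitzWith L γ) {a b u v : ℝ}
    (hu : u ∈ Set.Icc a b) (hv : v ∈ Set.Icc a b) :
    (curveStieltjes γ L hγ a b).measure (Set.Ioc u v) ≤ eVariationOn γ (Set.Icc u v) := by
  rcases le_or_gt u v with huv | huv
  · rw [StieltjesFunction.measure_Ioc]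
    have h := curveVar_sub hγ (a := a) (b := b) huv
    rw [clamp_of_mem hu, clamp_of_mem hv] at h
    simp only [curveStieltjes_apply]
    rw [h]
    exact ENNReal.ofReal_toReal_le
  · rw [Set.Ioc_eq_empty (not_lt.2 huv.le)]
    simp

end ChordAux


section ChordMod

open Set Filter
open scoped Topology

set_option linter.unusedSectionVars false
set_option linter.unusedVariables false

variable {X : Type*} [NormedAddCommGroup X] [NormedSpace ℝ X]

/-- Replace `γ` on the open interval `(s,t)` by the straight chord from `γ s` to `γ t`. -/
noncomputable def chordMod (γ : ℝ → X) (s t : ℝ) (u : ℝ) : X :=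
  if u ∈ Set.Ioo s t then AffineMap.lineMap (γ s) (γ t) ((u - s) / (t - s)) else γ u

lemma chordMod_eq_of_notMem {γ : ℝ → X} {s t u : ℝ} (h : u ∉ Set.Ioo s t) :
    chordMod γ s t u = γ u := if_neg h

lemma chordMod_eqOn_Iic (γ : ℝ → X) (s t : ℝ) : Set.EqOn (chordMod γ s t) γ (Set.Iic s) :=
  fun u hu => chordMod_eq_of_notMem (fun hm => absurd hm.1 (not_lt.2 hu))

lemma chordMod_eqOn_Ici (γ : ℝ → X) (s t : ℝ) : Set.EqOn (chordMod γ s t) γ (Set.Ici t) :=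
  fun u hu => chordMod_eq_of_notMem (fun hm => absurd hm.2 (not_lt.2 hu))

lemma chordMod_rep {γ : ℝ → X} {s t : ℝ} (hst : s < t) {u : ℝ} (hu : u ∈ Set.Icc s t) :
    chordMod γ s t u = AffineMap.lineMap (γ s) (γ t) ((u - s) / (t - s)) := by
  by_cases hm : u ∈ Set.Ioo s t
  · exact if_pos hm
  · rcases eq_or_lt_of_le hu.1 with rfl | hsu
    · rw [chordMod_eq_of_notMem hm]
      simp
    · have hut : u = t := le_antisymm hu.2 (not_lt.1 fun h => hm ⟨hsu, h⟩)
      subst hut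
      rw [chordMod_eq_of_notMem hm]
      rw [div_self (by linarith)]
      simp

lemma chordMod_lipschitz {L : ℝ≥0} {γ : ℝ → X} (hγ : LipschitzWith L γ) {s t : ℝ}
    (hst : s ≤ t) : LipschitzWith L (chordMod γ s t) := by
  rcases eq_or_lt_of_le hst with rfl | hlt
  · have : chordMod γ s s = γ := funext fun u => chordMod_eq_of_notMem (by simp)
    rwa [this]
  apply LipschitzWith.of_dist_le_mul
  have key : ∀ x y, x ≤ y → dist (chordMod γ s t x) (chordMod γ s t y) ≤ L * (y - x) := by
    intro x y hxy
    have hmid : ∀ u v, u ∈ Set.Icc s t → v ∈ Set.Icc s t → u ≤ v →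
        dist (chordMod γ s t u) (chordMod γ s t v) ≤ L * (v - u) := by
      intro u v hu hv huv
      rw [chordMod_rep hlt hu, chordMod_rep hlt hv, dist_lineMap_lineMap]
      have h1 : dist ((u - s) / (t - s)) ((v - s) / (t - s)) = (v - u) / (t - s) := by
        rw [Real.dist_eq, div_sub_div_same, abs_div, abs_of_nonpos (by linarith),
          abs_of_nonneg (by linarith)]
        ring
      rw [h1]
      have h2 : dist (γ s) (γ t) ≤ L * (t - s) := by
        have := hγ.dist_le_mul s t
        rwa [Real.dist_eq, abs_of_nonpos (by linarith), neg_sub] at this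
      calc (v - u) / (t - s) * dist (γ s) (γ t)
          ≤ (v - u) / (t - s) * (L * (t - s)) := by
            apply mul_le_mul_of_nonneg_left h2 (by apply div_nonneg <;> linarith)
        _ = L * (v - u) := by
            have hne : t - s ≠ 0 := by linarith
            field_simp
    rcases le_or_gt y s with hys | hsy
    · rw [chordMod_eqOn_Iic γ s t (Set.mem_Iic.mpr (le_trans hxy hys)),
        chordMod_eqOn_Iic γ s t (Set.mem_Iic.mpr hys)]
      have := hγ.dist_le_mul x y
      rwa [Real.dist_eq, abs_of_nonpos (by linarith), neg_sub] at this
    rcases le_or_gt t x with htx | hxt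
    · rw [chordMod_eqOn_Ici γ s t (Set.mem_Ici.mpr htx),
        chordMod_eqOn_Ici γ s t (Set.mem_Ici.mpr (le_trans htx hxy))]
      have := hγ.dist_le_mul x y
      rwa [Real.dist_eq, abs_of_nonpos (by linarith), neg_sub] at this
    set u := max x s with hu
    set v := min y t with hv
    have hus : u ∈ Set.Icc s t := ⟨le_max_right _ _, max_le hxt.le hlt.le⟩
    have hvs : v ∈ Set.Icc s t := ⟨le_min hsy.le hlt.le, min_le_right _ _⟩
    have huv : u ≤ v := max_le (le_min hxy hxt.le) (le_min hsy.le hlt.le)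
    have d1 : dist (chordMod γ s t x) (chordMod γ s t u) ≤ L * (u - x) := by
      rcases le_total x s with hxs | hsx
      · have hu' : u = s := max_eq_right hxs
        rw [hu', chordMod_eqOn_Iic γ s t (Set.mem_Iic.mpr hxs),
          chordMod_eqOn_Iic γ s t Set.self_mem_Iic]
        have := hγ.dist_le_mul x s
        rwa [Real.dist_eq, abs_of_nonpos (by linarith), neg_sub] at this
      · have hu' : u = x := max_eq_left hsx
        rw [hu']
        simp
    have d3 : dist (chordMod γ s t v) (chordMod γ s t y) ≤ L * (y - v) := by
      rcases le_total t y with hty | hyt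
      · have hv' : v = t := min_eq_right hty
        rw [hv', chordMod_eqOn_Ici γ s t Set.self_mem_Ici,
          chordMod_eqOn_Ici γ s t (Set.mem_Ici.mpr hty)]
        have := hγ.dist_le_mul t y
        rwa [Real.dist_eq, abs_of_nonpos (by linarith), neg_sub] at this
      · have hv' : v = y := min_eq_left hyt
        rw [hv']
        simp
    have d2 := hmid u v hus hvs huv
    calc dist (chordMod γ s t x) (chordMod γ s t y)
        ≤ dist (chordMod γ s t x) (chordMod γ s t u) + dist (chordMod γ s t u) (chordMod γ s t v)
            + dist (chordMod γ s t v) (chordMod γ s t y) := dist_triangle4 _ _ _ _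
      _ ≤ L * (u - x) + L * (v - u) + L * (y - v) := add_le_add (add_le_add d1 d2) d3
      _ = L * (y - x) := by ring
  intro x y
  rcases le_total x y with h | h
  · refine (key x y h).trans (le_of_eq ?_)
    rw [Real.dist_eq, abs_of_nonpos (by linarith), neg_sub]
  · have h2 := key y x h
    rw [dist_comm] at h2
    refine h2.trans (le_of_eq ?_)
    rw [Real.dist_eq, abs_of_nonneg (by linarith)]

lemma chordMod_evar_le (γ : ℝ → X) {s t : ℝ} (hst : s ≤ t) :
    eVariationOn (chordMod γ s t) (Set.Icc s t) ≤ edist (γ s) (γ t) := by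
  rcases eq_or_lt_of_le hst with rfl | hlt
  · rw [Set.Icc_self, eVariationOn.subsingleton _ Set.subsingleton_singleton]
    exact zero_le
  set c : ℝ≥0 := ⟨dist (γ s) (γ t) / (t - s), by apply div_nonneg dist_nonneg (by linarith)⟩ with hc
  have hlip : LipschitzOnWith c (chordMod γ s t) (Set.Icc s t) := by
    rw [lipschitzOnWith_iff_dist_le_mul]
    intro u hu v hv
    rw [chordMod_rep hlt hu, chordMod_rep hlt hv, dist_lineMap_lineMap]
    have h1 : dist ((u - s) / (t - s)) ((v - s) / (t - s)) = dist u v / (t - s) := by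
      rw [Real.dist_eq, Real.dist_eq, div_sub_div_same, abs_div,
        abs_of_nonneg (show (0:ℝ) ≤ t - s by linarith), sub_sub_sub_cancel_right]
    rw [h1]
    have : (c : ℝ) = dist (γ s) (γ t) / (t - s) := rfl
    rw [this]
    ring_nf
    exact le_of_eq (by ring)
  have h1 : eVariationOn (chordMod γ s t) (Set.Icc s t)
      ≤ (c : ℝ≥0∞) * eVariationOn id (Set.Icc s t) := by
    have := hlip.comp_eVariationOn_le (Set.mapsTo_id (Set.Icc s t))
    simpa [Function.comp] using this
  have h2 : eVariationOn (id : ℝ → ℝ) (Set.Icc s t) ≤ ENNReal.ofReal (t - s) := by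
    have := (monotoneOn_id (s := (Set.univ : Set ℝ))).eVariationOn_le
      (Set.mem_univ s) (Set.mem_univ t)
    simpa [Set.univ_inter] using this
  calc eVariationOn (chordMod γ s t) (Set.Icc s t)
      ≤ (c : ℝ≥0∞) * ENNReal.ofReal (t - s) := h1.trans (mul_le_mul_right h2 _)
    _ = ENNReal.ofReal (dist (γ s) (γ t) / (t - s)) * ENNReal.ofReal (t - s) := by
        rw [ENNReal.ofReal_eq_coe_nnreal (div_nonneg dist_nonneg (by linarith : (0:ℝ) ≤ t - s)),
          ENNReal.ofReal_eq_coe_nnreal (by linarith : (0:ℝ) ≤ t - s)]; rfl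
    _ = ENNReal.ofReal (dist (γ s) (γ t) / (t - s) * (t - s)) := by
        rw [ENNReal.ofReal_mul (div_nonneg dist_nonneg (by linarith : (0:ℝ) ≤ t - s))]
    _ = ENNReal.ofReal (dist (γ s) (γ t)) := by rw [div_mul_cancel₀ _ (by linarith : t - s ≠ 0)]
    _ = edist (γ s) (γ t) := (edist_dist _ _).symm

lemma chordMod_image_subset {γ : ℝ → X} {Ω : Set X} (hΩ : Convex ℝ Ω) {a b s t : ℝ}
    (has : a ≤ s) (hst : s ≤ t) (htb : t ≤ b) (h : γ '' Set.Icc a b ⊆ Ω) :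
    chordMod γ s t '' Set.Icc a b ⊆ Ω := by
  rintro _ ⟨u, hu, rfl⟩
  by_cases hm : u ∈ Set.Ioo s t
  · rw [chordMod, if_pos hm]
    have hts : (0:ℝ) < t - s := by linarith [hm.1, hm.2]
    apply hΩ.lineMap_mem (h ⟨s, ⟨has, hst.trans htb⟩, rfl⟩) (h ⟨t, ⟨has.trans hst, htb⟩, rfl⟩)
    constructor
    · apply div_nonneg (by linarith [hm.1]) (by linarith)
    · rw [div_le_one hts]; linarith [hm.2]
  · rw [chordMod_eq_of_notMem hm]
    exact h ⟨u, hu, rfl⟩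

end ChordMod


section RestrictAux

open Set Filter MeasureTheory
open scoped Topology

set_option linter.unusedSectionVars false
set_option linter.unusedVariables false

variable {X : Type*} [NormedAddCommGroup X] [NormedSpace ℝ X]

lemma curveVar_nonneg (γ : ℝ → X) (a b t : ℝ) : 0 ≤ curveVar γ a b t :=
  ENNReal.toReal_nonneg

lemma curveVar_congr_Iic {γ₁ γ₂ : ℝ → X} {a b s : ℝ} (has : a ≤ s)
    (h : Set.EqOn γ₁ γ₂ (Set.Iic s)) {u : ℝ} (hu : u ≤ s) :
    curveVar γ₁ a b u = curveVar γ₂ a b u := by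
  unfold curveVar
  congr 1
  apply eVariationOn.eq_of_eqOn
  intro x hx
  exact h (Set.mem_Iic.mpr (le_trans hx.2 (max_le has (le_trans (min_le_left u b) hu))))

lemma restrict_Iic_eq {L : ℝ≥0} {γ₁ γ₂ : ℝ → X} (h₁ : LipschitzWith L γ₁)
    (h₂ : LipschitzWith L γ₂) {a b s : ℝ} (hab : a ≤ b) (has : a ≤ s)
    (h : Set.EqOn γ₁ γ₂ (Set.Iic s)) :
    (curveStieltjes γ₁ L h₁ a b).measure.restrict (Set.Iic s)
      = (curveStieltjes γ₂ L h₂ a b).measure.restrict (Set.Iic s) := by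
  haveI := curveMeasure_finite h₁ hab
  refine Measure.ext_of_Ioc_finite _ _ ?_ (fun u v huv => ?_)
  · rw [Measure.restrict_apply_univ, Measure.restrict_apply_univ,
      curveMeasure_Iic h₁ hab, curveMeasure_Iic h₂ hab, curveVar_congr_Iic has h le_rfl]
  · rw [Measure.restrict_apply measurableSet_Ioc, Measure.restrict_apply measurableSet_Ioc]
    have hset : Set.Ioc u v ∩ Set.Iic s = Set.Ioc u (min v s) := by
      ext x
      simp only [Set.mem_inter_iff, Set.mem_Ioc, Set.mem_Iic, le_min_iff]
      tauto
    rw [hset]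
    by_cases hus : u ≤ s
    · rw [StieltjesFunction.measure_Ioc, StieltjesFunction.measure_Ioc]
      simp only [curveStieltjes_apply]
      rw [curveVar_congr_Iic has h (min_le_right v s), curveVar_congr_Iic has h hus]
    · have hempty : Set.Ioc u (min v s) = ∅ :=
        Set.Ioc_eq_empty (fun hcon => hus (le_trans hcon.le (min_le_right v s)))
      rw [hempty]
      simp

lemma curveVar_congr_Ici {L : ℝ≥0} {γ₁ γ₂ : ℝ → X} (h₁ : LipschitzWith L γ₁)
    (h₂ : LipschitzWith L γ₂) {a b t : ℝ} (htb : t ≤ b)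
    (h : Set.EqOn γ₁ γ₂ (Set.Ici t)) {u v : ℝ} (htu : t ≤ u) (huv : u ≤ v) :
    curveVar γ₁ a b v - curveVar γ₁ a b u = curveVar γ₂ a b v - curveVar γ₂ a b u := by
  rw [curveVar_sub h₁ huv, curveVar_sub h₂ huv]
  congr 1
  apply eVariationOn.eq_of_eqOn
  intro x hx
  exact h (Set.mem_Ici.mpr (le_trans (le_trans (le_min htu htb) (le_max_right a _)) hx.1))

lemma restrict_Ioi_eq {L : ℝ≥0} {γ₁ γ₂ : ℝ → X} (h₁ : LipschitzWith L γ₁)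
    (h₂ : LipschitzWith L γ₂) {a b t : ℝ} (hab : a ≤ b) (htb : t ≤ b)
    (h : Set.EqOn γ₁ γ₂ (Set.Ici t)) :
    (curveStieltjes γ₁ L h₁ a b).measure.restrict (Set.Ioi t)
      = (curveStieltjes γ₂ L h₂ a b).measure.restrict (Set.Ioi t) := by
  haveI := curveMeasure_finite h₁ hab
  haveI := curveMeasure_finite h₂ hab
  have e : ∀ (γ : ℝ → X) (hγ : LipschitzWith L γ),
      (curveStieltjes γ L hγ a b).measure (Set.Ioi t)
        = ENNReal.ofReal (curveVar γ a b b - curveVar γ a b t) := by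
    intro γ hγ
    haveI := curveMeasure_finite hγ hab
    rw [show Set.Ioi t = (Set.Iic t)ᶜ from (Set.compl_Iic).symm,
      measure_compl measurableSet_Iic (measure_ne_top _ _), curveMeasure_univ hγ hab,
      curveMeasure_Iic hγ hab, ← ENNReal.ofReal_sub _ (curveVar_nonneg γ a b t)]
  refine Measure.ext_of_Ioc_finite _ _ ?_ (fun u v huv => ?_)
  · rw [Measure.restrict_apply_univ, Measure.restrict_apply_univ, e γ₁ h₁, e γ₂ h₂,
      curveVar_congr_Ici h₁ h₂ htb h le_rfl htb]
  · rw [Measure.restrict_apply measurableSet_Ioc, Measure.restrict_apply measurableSet_Ioc]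
    have hset : Set.Ioc u v ∩ Set.Ioi t = Set.Ioc (max u t) v := by
      ext x
      simp only [Set.mem_inter_iff, Set.mem_Ioc, Set.mem_Ioi, max_lt_iff]
      tauto
    rw [hset]
    by_cases hwv : max u t ≤ v
    · rw [StieltjesFunction.measure_Ioc, StieltjesFunction.measure_Ioc]
      simp only [curveStieltjes_apply]
      congr 1
      exact curveVar_congr_Ici h₁ h₂ htb h (le_max_right u t) hwv
    · rw [Set.Ioc_eq_empty (fun hcon => hwv hcon.le)]
      simp

lemma chord_measure_le [MeasurableSpace X] [BorelSpace X] {L : ℝ≥0} {γ₁ γ : ℝ → X}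
    (h₁ : LipschitzWith L γ₁) (hγ : LipschitzWith L γ) {a b s t : ℝ} (hab : a ≤ b)
    (has : a ≤ s) (hst : s ≤ t) (htb : t ≤ b)
    (hIic : Set.EqOn γ₁ γ (Set.Iic s)) (hIci : Set.EqOn γ₁ γ (Set.Ici t))
    {A : Set X} (hA : MeasurableSet A) :
    (curveStieltjes γ₁ L h₁ a b).measure (γ₁ ⁻¹' A)
      ≤ (curveStieltjes γ L hγ a b).measure (γ ⁻¹' A)
        + (curveStieltjes γ₁ L h₁ a b).measure (Set.Ioc s t) := by
  set Λ₁ := (curveStieltjes γ₁ L h₁ a b).measure with hΛ₁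
  set Λ := (curveStieltjes γ L hγ a b).measure with hΛ
  have hm₁ : MeasurableSet (γ₁ ⁻¹' A) := hA.preimage h₁.continuous.measurable
  have hm : MeasurableSet (γ ⁻¹' A) := hA.preimage hγ.continuous.measurable
  have hsub : γ₁ ⁻¹' A ⊆ (γ₁ ⁻¹' A ∩ Set.Iic s) ∪ Set.Ioc s t ∪ (γ₁ ⁻¹' A ∩ Set.Ioi t) := by
    intro x hx
    rcases le_or_gt x s with hx1 | hx1
    · exact Or.inl (Or.inl ⟨hx, hx1⟩)
    rcases le_or_gt x t with hx2 | hx2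
    · exact Or.inl (Or.inr ⟨hx1, hx2⟩)
    · exact Or.inr ⟨hx, hx2⟩
  have step1 : Λ₁ (γ₁ ⁻¹' A)
      ≤ Λ₁ (γ₁ ⁻¹' A ∩ Set.Iic s) + Λ₁ (Set.Ioc s t) + Λ₁ (γ₁ ⁻¹' A ∩ Set.Ioi t) :=
    (measure_mono hsub).trans ((measure_union_le _ _).trans
      (add_le_add_left (measure_union_le _ _) _))
  have eq1 : Λ₁ (γ₁ ⁻¹' A ∩ Set.Iic s) = Λ (γ ⁻¹' A ∩ Set.Iic s) := by
    have hseteq : γ₁ ⁻¹' A ∩ Set.Iic s = γ ⁻¹' A ∩ Set.Iic s := by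
      ext x
      constructor <;> rintro ⟨hx1, hx2⟩ <;> refine ⟨?_, hx2⟩
      · show γ x ∈ A
        rwa [← hIic hx2]
      · show γ₁ x ∈ A
        rwa [hIic hx2]
    calc Λ₁ (γ₁ ⁻¹' A ∩ Set.Iic s) = Λ₁.restrict (Set.Iic s) (γ₁ ⁻¹' A) :=
          (Measure.restrict_apply hm₁).symm
      _ = Λ.restrict (Set.Iic s) (γ₁ ⁻¹' A) := by
          rw [hΛ₁, hΛ, restrict_Iic_eq h₁ hγ hab has hIic]
      _ = Λ (γ₁ ⁻¹' A ∩ Set.Iic s) := Measure.restrict_apply hm₁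
      _ = Λ (γ ⁻¹' A ∩ Set.Iic s) := by rw [hseteq]
  have eq2 : Λ₁ (γ₁ ⁻¹' A ∩ Set.Ioi t) = Λ (γ ⁻¹' A ∩ Set.Ioi t) := by
    have hseteq : γ₁ ⁻¹' A ∩ Set.Ioi t = γ ⁻¹' A ∩ Set.Ioi t := by
      ext x
      constructor <;> rintro ⟨hx1, hx2⟩ <;> refine ⟨?_, hx2⟩
      · show γ x ∈ A
        rwa [← hIci (Set.mem_Ici.mpr (le_of_lt hx2))]
      · show γ₁ x ∈ A
        rwa [hIci (Set.mem_Ici.mpr (le_of_lt hx2))]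
    calc Λ₁ (γ₁ ⁻¹' A ∩ Set.Ioi t) = Λ₁.restrict (Set.Ioi t) (γ₁ ⁻¹' A) :=
          (Measure.restrict_apply hm₁).symm
      _ = Λ.restrict (Set.Ioi t) (γ₁ ⁻¹' A) := by
          rw [hΛ₁, hΛ, restrict_Ioi_eq h₁ hγ hab htb hIci]
      _ = Λ (γ₁ ⁻¹' A ∩ Set.Ioi t) := Measure.restrict_apply hm₁
      _ = Λ (γ ⁻¹' A ∩ Set.Ioi t) := by rw [hseteq]
  have final : Λ (γ ⁻¹' A ∩ Set.Iic s) + Λ (γ ⁻¹' A ∩ Set.Ioi t) ≤ Λ (γ ⁻¹' A) := by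
    rw [← measure_union (Set.disjoint_of_subset Set.inter_subset_right Set.inter_subset_right
      (Set.Iic_disjoint_Ioi hst)) (hm.inter measurableSet_Ioi)]
    exact measure_mono (Set.union_subset Set.inter_subset_left Set.inter_subset_left)
  calc Λ₁ (γ₁ ⁻¹' A)
      ≤ Λ (γ ⁻¹' A ∩ Set.Iic s) + Λ₁ (Set.Ioc s t) + Λ (γ ⁻¹' A ∩ Set.Ioi t) := by
        rw [← eq1, ← eq2]; exact step1
    _ = Λ (γ ⁻¹' A ∩ Set.Iic s) + Λ (γ ⁻¹' A ∩ Set.Ioi t) + Λ₁ (Set.Ioc s t) := by ring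
    _ ≤ Λ (γ ⁻¹' A) + Λ₁ (Set.Ioc s t) := add_le_add_left final _

end RestrictAux


section MainRec

open Set Filter MeasureTheory
open scoped Topology ENNReal

set_option linter.unusedSectionVars false
set_option linter.unusedVariables false

lemma curve_mod_rec {X : Type*} [NormedAddCommGroup X] [NormedSpace ℝ X] [MeasurableSpace X]
    [BorelSpace X] {Ω K : Set X} (hΩ : Convex ℝ Ω) (hK : MeasurableSet K)
    {a b : ℝ} (hab : a ≤ b) {L : ℝ≥0} (D : ℕ → Set X) (hD : ∀ i, IsClosed (D i)) :
    ∀ (n : ℕ) (F : Finset ℕ), F.card ≤ n → ∀ (γ : ℝ → X) (hγ : LipschitzWith L γ),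
      γ '' Set.Icc a b ⊆ Ω → ∀ lo, lo ∈ Set.Icc a b →
      (∀ t ∈ Set.Ioc lo b, γ t ∈ K → ∃ i ∈ F, γ t ∈ D i) →
      ∃ (γ' : ℝ → X) (hγ' : LipschitzWith L γ'),
        γ' '' Set.Icc a b ⊆ Ω ∧ Set.EqOn γ' γ (Set.Iic lo) ∧ Set.EqOn γ' γ (Set.Ici b) ∧
        (curveStieltjes γ' L hγ' a b).measure (γ' ⁻¹' K ∩ Set.Ioc lo b)
          ≤ ∑ i ∈ F, EMetric.diam (D i) ∧
        ∀ A : Set X, MeasurableSet A →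
          (curveStieltjes γ' L hγ' a b).measure (γ' ⁻¹' A)
            ≤ (curveStieltjes γ L hγ a b).measure (γ ⁻¹' A) + ∑ i ∈ F, EMetric.diam (D i) := by
  intro n
  induction n with
  | zero =>
    intro F hF γ hγ hγΩ lo hlo hyp
    have hFe : F = ∅ := Finset.card_eq_zero.mp (le_antisymm hF (Nat.zero_le _))
    subst hFe
    refine ⟨γ, hγ, hγΩ, Set.eqOn_refl _ _, Set.eqOn_refl _ _, ?_, ?_⟩
    · have hempty : γ ⁻¹' K ∩ Set.Ioc lo b = ∅ := by
        ext t
        simp only [Set.mem_inter_iff, Set.mem_empty_iff_false, iff_false, not_and]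
        intro h1 h2
        obtain ⟨i, hi, -⟩ := hyp t h2 h1
        exact absurd hi (Finset.notMem_empty i)
      rw [hempty]
      simp
    · intro A hA
      simp
  | succ n ih =>
    intro F hF γ hγ hγΩ lo hlo hyp
    classical
    set C : ℕ → Set ℝ := fun i => γ ⁻¹' (D i) ∩ Set.Icc lo b with hC
    by_cases hex : ∃ i ∈ F, (C i).Nonempty
    case neg =>
      refine ⟨γ, hγ, hγΩ, Set.eqOn_refl _ _, Set.eqOn_refl _ _, ?_, ?_⟩
      · have hempty : γ ⁻¹' K ∩ Set.Ioc lo b = ∅ := by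
          ext t
          simp only [Set.mem_inter_iff, Set.mem_empty_iff_false, iff_false, not_and]
          intro h1 h2
          obtain ⟨i, hi, hti⟩ := hyp t h2 h1
          exact absurd ⟨i, hi, t, hti, ⟨h2.1.le, h2.2⟩⟩ hex
        rw [hempty]
        simp
      · intro A hA
        exact le_self_add
    case pos =>
      set F₁ := F.filter (fun i => (C i).Nonempty) with hF₁
      have hF₁ne : F₁.Nonempty := by
        obtain ⟨i, hi, hne⟩ := hex
        exact ⟨i, Finset.mem_filter.mpr ⟨hi, hne⟩⟩
      obtain ⟨i₁, hi₁, hmin⟩ := F₁.exists_min_image (fun i => sInf (C i)) hF₁ne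
      have hi₁F : i₁ ∈ F := (Finset.mem_filter.mp hi₁).1
      have hi₁ne : (C i₁).Nonempty := (Finset.mem_filter.mp hi₁).2
      have hCclosed : ∀ i, IsClosed (C i) := fun i =>
        ((hD i).preimage hγ.continuous).inter isClosed_Icc
      have hCbddB : ∀ i, BddBelow (C i) := fun i =>
        BddBelow.mono Set.inter_subset_right bddBelow_Icc
      have hCbddA : ∀ i, BddAbove (C i) := fun i =>
        BddAbove.mono Set.inter_subset_right bddAbove_Icc
      set s₁ := sInf (C i₁) with hs₁def
      set t₁ := sSup (C i₁) with ht₁def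
      have hs₁mem : s₁ ∈ C i₁ := (hCclosed i₁).csInf_mem hi₁ne (hCbddB i₁)
      have ht₁mem : t₁ ∈ C i₁ := (hCclosed i₁).csSup_mem hi₁ne (hCbddA i₁)
      have hs₁t₁ : s₁ ≤ t₁ := csInf_le_csSup hi₁ne (hCbddB i₁) (hCbddA i₁)
      have hlos₁ : lo ≤ s₁ := hs₁mem.2.1
      have has₁ : a ≤ s₁ := hlo.1.trans hlos₁
      have ht₁b : t₁ ≤ b := ht₁mem.2.2
      have hat₁ : a ≤ t₁ := has₁.trans hs₁t₁
      set γ₁ := chordMod γ s₁ t₁ with hγ₁def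
      have hγ₁ : LipschitzWith L γ₁ := chordMod_lipschitz hγ hs₁t₁
      have hγ₁Ω : γ₁ '' Set.Icc a b ⊆ Ω := chordMod_image_subset hΩ has₁ hs₁t₁ ht₁b hγΩ
      have hEqIic : Set.EqOn γ₁ γ (Set.Iic s₁) := chordMod_eqOn_Iic γ s₁ t₁
      have hEqIci : Set.EqOn γ₁ γ (Set.Ici t₁) := chordMod_eqOn_Ici γ s₁ t₁
      have hchord₁ : (curveStieltjes γ₁ L hγ₁ a b).measure (Set.Ioc s₁ t₁)
          ≤ EMetric.diam (D i₁) := by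
        calc (curveStieltjes γ₁ L hγ₁ a b).measure (Set.Ioc s₁ t₁)
            ≤ eVariationOn γ₁ (Set.Icc s₁ t₁) :=
              curveMeasure_Ioc_le hγ₁ ⟨has₁, hs₁t₁.trans ht₁b⟩ ⟨hat₁, ht₁b⟩
          _ ≤ edist (γ s₁) (γ t₁) := chordMod_evar_le γ hs₁t₁
          _ ≤ EMetric.diam (D i₁) := EMetric.edist_le_diam_of_mem hs₁mem.1 ht₁mem.1
      have hyp' : ∀ t ∈ Set.Ioc t₁ b, γ₁ t ∈ K → ∃ i ∈ F.erase i₁, γ₁ t ∈ D i := by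
        intro t ht hKt
        have heq : γ₁ t = γ t := hEqIci (Set.mem_Ici.mpr ht.1.le)
        rw [heq] at hKt
        obtain ⟨i, hiF, hiD⟩ := hyp t ⟨lt_of_le_of_lt (hlos₁.trans hs₁t₁) ht.1, ht.2⟩ hKt
        refine ⟨i, Finset.mem_erase.mpr ⟨?_, hiF⟩, by rw [heq]; exact hiD⟩
        rintro rfl
        have htC : t ∈ C i := ⟨hiD, (lt_of_le_of_lt (hlos₁.trans hs₁t₁) ht.1).le, ht.2⟩
        exact absurd (le_csSup (hCbddA i) htC) (not_le.mpr ht.1)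
      have hcard : (F.erase i₁).card ≤ n := by
        have := Finset.card_erase_of_mem hi₁F
        omega
      obtain ⟨γ', hγ', hΩ', hIic', hIci', h3', h4'⟩ :=
        ih (F.erase i₁) hcard γ₁ hγ₁ hγ₁Ω t₁ ⟨hat₁, ht₁b⟩ hyp'
      have hres : (curveStieltjes γ' L hγ' a b).measure (Set.Ioc s₁ t₁)
          = (curveStieltjes γ₁ L hγ₁ a b).measure (Set.Ioc s₁ t₁) := by
        have h1 := restrict_Iic_eq hγ' hγ₁ hab hat₁ hIic'
        have h2 : Set.Ioc s₁ t₁ ∩ Set.Iic t₁ = Set.Ioc s₁ t₁ :=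
          Set.inter_eq_left.mpr (fun x hx => hx.2)
        calc (curveStieltjes γ' L hγ' a b).measure (Set.Ioc s₁ t₁)
            = (curveStieltjes γ' L hγ' a b).measure.restrict (Set.Iic t₁) (Set.Ioc s₁ t₁) := by
              rw [Measure.restrict_apply measurableSet_Ioc, h2]
          _ = (curveStieltjes γ₁ L hγ₁ a b).measure.restrict (Set.Iic t₁) (Set.Ioc s₁ t₁) := by
              rw [h1]
          _ = (curveStieltjes γ₁ L hγ₁ a b).measure (Set.Ioc s₁ t₁) := by
              rw [Measure.restrict_apply measurableSet_Ioc, h2]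
      refine ⟨γ', hγ', hΩ', ?_, ?_, ?_, ?_⟩
      · intro x hx
        have hx1 : x ∈ Set.Iic t₁ := Set.mem_Iic.mpr (le_trans hx (hlos₁.trans hs₁t₁))
        rw [hIic' hx1]
        exact hEqIic (Set.mem_Iic.mpr (le_trans hx hlos₁))
      · intro x hx
        rw [hIci' hx]
        exact hEqIci (Set.mem_Ici.mpr (le_trans ht₁b hx))
      · have hsub : γ' ⁻¹' K ∩ Set.Ioc lo b
            ⊆ ({s₁} ∪ Set.Ioc s₁ t₁) ∪ (γ' ⁻¹' K ∩ Set.Ioc t₁ b) := by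
          rintro x ⟨hxK, hxlo, hxb⟩
          rcases lt_or_ge t₁ x with hxt₁ | hxt₁
          · exact Or.inr ⟨hxK, hxt₁, hxb⟩
          rcases lt_or_ge s₁ x with hsx | hxs
          · exact Or.inl (Or.inr ⟨hsx, hxt₁⟩)
          rcases eq_or_lt_of_le hxs with heq | hxlt
          · exact Or.inl (Or.inl heq)
          · exfalso
            have hgx : γ' x = γ x := by
              rw [hIic' (Set.mem_Iic.mpr (hxs.trans hs₁t₁))]
              exact hEqIic (Set.mem_Iic.mpr hxs)
            have hγxK : γ x ∈ K := by
              have : γ' x ∈ K := hxK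
              rwa [hgx] at this
            obtain ⟨i, hiF, hiD⟩ := hyp x ⟨hxlo, hxb⟩ hγxK
            have hxC : x ∈ C i := ⟨hiD, hxlo.le, hxb⟩
            have hiF₁ : i ∈ F₁ := Finset.mem_filter.mpr ⟨hiF, ⟨x, hxC⟩⟩
            have hle := (hmin i hiF₁).trans (csInf_le (hCbddB i) hxC)
            exact absurd hle (not_le.mpr hxlt)
        calc (curveStieltjes γ' L hγ' a b).measure (γ' ⁻¹' K ∩ Set.Ioc lo b)
            ≤ (curveStieltjes γ' L hγ' a b).measure ({s₁} ∪ Set.Ioc s₁ t₁)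
              + (curveStieltjes γ' L hγ' a b).measure (γ' ⁻¹' K ∩ Set.Ioc t₁ b) :=
              (measure_mono hsub).trans (measure_union_le _ _)
          _ ≤ ((curveStieltjes γ' L hγ' a b).measure {s₁}
              + (curveStieltjes γ' L hγ' a b).measure (Set.Ioc s₁ t₁))
              + ∑ i ∈ F.erase i₁, EMetric.diam (D i) :=
              add_le_add (measure_union_le _ _) h3'
          _ ≤ (0 + EMetric.diam (D i₁)) + ∑ i ∈ F.erase i₁, EMetric.diam (D i) := by
              apply add_le_add_left
              apply add_le_add
              · exact le_of_eq (curveMeasure_singleton hγ' a b s₁)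
              · rw [hres]
                exact hchord₁
          _ = ∑ i ∈ F, EMetric.diam (D i) := by
              rw [zero_add, Finset.add_sum_erase _ (fun i => EMetric.diam (D i)) hi₁F]
      · intro A hA
        have hstep := chord_measure_le hγ₁ hγ hab has₁ hs₁t₁ ht₁b hEqIic hEqIci hA
        calc (curveStieltjes γ' L hγ' a b).measure (γ' ⁻¹' A)
            ≤ (curveStieltjes γ₁ L hγ₁ a b).measure (γ₁ ⁻¹' A)
              + ∑ i ∈ F.erase i₁, EMetric.diam (D i) := h4' A hA
          _ ≤ ((curveStieltjes γ L hγ a b).measure (γ ⁻¹' A)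
              + (curveStieltjes γ₁ L hγ₁ a b).measure (Set.Ioc s₁ t₁))
              + ∑ i ∈ F.erase i₁, EMetric.diam (D i) := add_le_add_left hstep _
          _ ≤ ((curveStieltjes γ L hγ a b).measure (γ ⁻¹' A) + EMetric.diam (D i₁))
              + ∑ i ∈ F.erase i₁, EMetric.diam (D i) :=
              add_le_add_left (add_le_add_right hchord₁ _) _
          _ = (curveStieltjes γ L hγ a b).measure (γ ⁻¹' A) + ∑ i ∈ F, EMetric.diam (D i) := by
              rw [add_assoc, Finset.add_sum_erase _ (fun i => EMetric.diam (D i)) hi₁F]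

end MainRec


/-- **Curve modification in a set of small Hausdorff content.** Let `Ω` be a compact convex
subset of a Banach space. For any Lipschitz curve `γ : [a,b] → Ω`, `ε > 0`, and compact
`K ⊆ Ω` with `H¹_∞(im(γ) ∩ K) < ε`, there is a Lipschitz curve `γ̃ : [a,b] → Ω` with the
same endpoints such that `μ_γ̃(K) < ε` and `μ_γ̃(A) < μ_γ(A) + ε` for every Borel
`A ⊆ Ω`. -/
theorem curve_modification_small_content
    {X : Type*} [NormedAddCommGroup X] [NormedSpace ℝ X] [CompleteSpace X]
    [MeasurableSpace X] [BorelSpace X]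
    (Ω : Set X) (hΩc : IsCompact Ω) (hΩ : Convex ℝ Ω)
    (a b : ℝ) (hab : a ≤ b) (γ : ℝ → X) (L : ℝ≥0) (hγ : LipschitzWith L γ)
    (hγΩ : γ '' Set.Icc a b ⊆ Ω)
    (ε : ℝ) (hε : 0 < ε) (K : Set X) (hKΩ : K ⊆ Ω) (hKc : IsCompact K)
    (hKcontent : hausdorffContent (γ '' Set.Icc a b ∩ K) < ENNReal.ofReal ε) :
    ∃ (γ' : ℝ → X) (L' : ℝ≥0) (hγ' : LipschitzWith L' γ'),
      γ' '' Set.Icc a b ⊆ Ω ∧ γ' a = γ a ∧ γ' b = γ b ∧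
      curveMeasure γ' L' hγ' a b K < ENNReal.ofReal ε ∧
      (∀ A : Set X, A ⊆ Ω → MeasurableSet A →
        curveMeasure γ' L' hγ' a b A < curveMeasure γ L hγ a b A + ENNReal.ofReal ε) := by
  classical
  have hKm : MeasurableSet K := hKc.measurableSet
  rw [hausdorffContent] at hKcontent
  obtain ⟨E, hEc⟩ := iInf_lt_iff.mp hKcontent
  obtain ⟨hEcov, hEsum⟩ := iInf_lt_iff.mp hEc
  obtain ⟨δ, hδpos, hδlt⟩ := ENNReal.lt_iff_exists_add_pos_lt.mp hEsum
  obtain ⟨w, hwpos, hwsum⟩ :=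
    ENNReal.exists_pos_sum_of_countable (ENNReal.coe_ne_zero.mpr hδpos.ne') ℕ
  set D : ℕ → Set X := fun i => Metric.cthickening ((w i / 2 : ℝ≥0) : ℝ) (E i) with hDdef
  have hDclosed : ∀ i, IsClosed (D i) := fun i => Metric.isClosed_cthickening
  have hpos : ∀ i, (0 : ℝ) < ((w i / 2 : ℝ≥0) : ℝ) := by
    intro i
    have h1 : (0 : ℝ) < (w i : ℝ) := hwpos i
    rw [NNReal.coe_div]
    norm_num
    exact h1
  have hDdiam : ∀ i, EMetric.diam (D i) ≤ EMetric.diam (E i) + (w i : ℝ≥0∞) := by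
    intro i
    have h := Metric.ediam_cthickening_le (s := E i) (w i / 2)
    have h2w : 2 * ((w i / 2 : ℝ≥0) : ℝ≥0∞) = (w i : ℝ≥0∞) := by
      rw [show ((2 : ℝ≥0∞)) = ((2 : ℝ≥0) : ℝ≥0∞) by norm_cast, ← ENNReal.coe_mul]
      congr 1
      rw [mul_comm, div_mul_cancel₀ _ (two_ne_zero)]
    rwa [h2w] at h
  have hKim : IsCompact (γ '' Set.Icc a b ∩ K) :=
    (isCompact_Icc.image hγ.continuous).inter_right hKc.isClosed
  have hcov : γ '' Set.Icc a b ∩ K ⊆ ⋃ i, Metric.thickening ((w i / 2 : ℝ≥0) : ℝ) (E i) := by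
    intro x hx
    obtain ⟨i, hi⟩ := Set.mem_iUnion.mp (hEcov hx)
    exact Set.mem_iUnion.mpr ⟨i, Metric.self_subset_thickening (hpos i) _ hi⟩
  obtain ⟨F, hF⟩ := hKim.elim_finite_subcover _
    (fun i => Metric.isOpen_thickening) hcov
  have hsumF : ∑ i ∈ F, EMetric.diam (D i) < ENNReal.ofReal ε := by
    calc ∑ i ∈ F, EMetric.diam (D i)
        ≤ ∑ i ∈ F, (EMetric.diam (E i) + (w i : ℝ≥0∞)) :=
          Finset.sum_le_sum (fun i _ => hDdiam i)
      _ ≤ ∑' i, (EMetric.diam (E i) + (w i : ℝ≥0∞)) := ENNReal.sum_le_tsum F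
      _ = (∑' i, EMetric.diam (E i)) + ∑' i, (w i : ℝ≥0∞) := ENNReal.tsum_add
      _ ≤ (∑' i, EMetric.diam (E i)) + (δ : ℝ≥0∞) := add_le_add_right hwsum.le _
      _ < ENNReal.ofReal ε := hδlt
  have hyp : ∀ t ∈ Set.Ioc a b, γ t ∈ K → ∃ i ∈ F, γ t ∈ D i := by
    intro t ht hKt
    have hmem : γ t ∈ γ '' Set.Icc a b ∩ K := ⟨⟨t, ⟨ht.1.le, ht.2⟩, rfl⟩, hKt⟩
    obtain ⟨i, hiF, hthick⟩ := Set.mem_iUnion₂.mp (hF hmem)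
    exact ⟨i, hiF, Metric.thickening_subset_cthickening _ _ hthick⟩
  obtain ⟨γ', hγ', hΩ', hIic', hIci', h3, h4⟩ :=
    curve_mod_rec hΩ hKm hab D hDclosed F.card F le_rfl γ hγ hγΩ a ⟨le_rfl, hab⟩ hyp
  refine ⟨γ', L, hγ', hΩ', hIic' (Set.mem_Iic.mpr le_rfl), hIci' (Set.mem_Ici.mpr le_rfl),
    ?_, ?_⟩
  · have hmapK : curveMeasure γ' L hγ' a b K
        = (curveStieltjes γ' L hγ' a b).measure (γ' ⁻¹' K) := by
      rw [curveMeasure, MeasureTheory.Measure.map_apply hγ'.continuous.measurable hKm]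
    have hKsub : γ' ⁻¹' K ⊆ (Set.Iic a ∪ (γ' ⁻¹' K ∩ Set.Ioc a b)) ∪ Set.Ioi b := by
      intro x hx
      rcases le_or_gt x a with h1 | h1
      · exact Or.inl (Or.inl h1)
      rcases le_or_gt x b with h2 | h2
      · exact Or.inl (Or.inr ⟨hx, h1, h2⟩)
      · exact Or.inr h2
    rw [hmapK]
    calc (curveStieltjes γ' L hγ' a b).measure (γ' ⁻¹' K)
        ≤ ((curveStieltjes γ' L hγ' a b).measure (Set.Iic a)
            + (curveStieltjes γ' L hγ' a b).measure (γ' ⁻¹' K ∩ Set.Ioc a b))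
            + (curveStieltjes γ' L hγ' a b).measure (Set.Ioi b) :=
          (measure_mono hKsub).trans ((measure_union_le _ _).trans
            (add_le_add_left (measure_union_le _ _) _))
      _ = (curveStieltjes γ' L hγ' a b).measure (γ' ⁻¹' K ∩ Set.Ioc a b) := by
          rw [curveMeasure_Iic_zero hγ' hab, curveMeasure_Ioi_zero hγ' hab, zero_add, add_zero]
      _ ≤ ∑ i ∈ F, EMetric.diam (D i) := h3
      _ < ENNReal.ofReal ε := hsumF
  · intro A hAΩ hA
    have h1 : curveMeasure γ' L hγ' a b A
        = (curveStieltjes γ' L hγ' a b).measure (γ' ⁻¹' A) := by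
      rw [curveMeasure, MeasureTheory.Measure.map_apply hγ'.continuous.measurable hA]
    have h2 : curveMeasure γ L hγ a b A
        = (curveStieltjes γ L hγ a b).measure (γ ⁻¹' A) := by
      rw [curveMeasure, MeasureTheory.Measure.map_apply hγ.continuous.measurable hA]
    rw [h1, h2]
    have hfin : (curveStieltjes γ L hγ a b).measure (γ ⁻¹' A) ≠ ⊤ := by
      haveI := curveMeasure_finite hγ hab
      exact MeasureTheory.measure_ne_top _ _
    exact lt_of_le_of_lt (h4 A hA) (ENNReal.add_lt_add_left hfin hsumF)
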